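/- arXiv:2306.16486 — 3 statements merged into one kernel-verified Lean document; each statement's English description precedes it below -/
import Mathlib

section
/- Suppose η : ℝ → ℝ is continuous and there exists δ₀ > 0 such that ∫_ξ^t η(s) ds ≥ δ₀·(t-ξ) for all 0 ≤ ξ ≤ t. If a nonnegative differentiable function w satisfies w'(t) + η(t)·w(t) ≤ F_max for all t ∈ [0,T], with w(0) = 0 and F_max ≥ 0 a constant, then w(t) ≤ (1 - exp(-δ₀·t))/δ₀ · F_max for all t ∈ [0,T]. -/
/-!
With the integrating factor `exp Θ`, `Θ u = ∫₀ᵘ η`, the differential inequality says that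
`exp Θ · w - ∫₀ exp Θ · Fmax` is antitone, which gives Duhamel's bound
`w t ≤ ∫₀ᵗ exp (-∫ₛᵗ η) Fmax ds`. The dissipativity `∫ₛᵗ η ≥ δ₀ (t - s)` bounds the kernel by
`exp (-δ₀ (t - s))`, whose integral over `[0, t]` is `(1 - exp (-δ₀ t)) / δ₀`.
-/

open Real Set

theorem integral_exp_neg_mul_sub {δ : ℝ} (hδ : δ ≠ 0) (t : ℝ) :
    ∫ s in (0:ℝ)..t, exp (-δ * (t - s)) = (1 - exp (-δ * t)) / δ := by
  have hlin : ∀ s, -δ * (t - s) = δ * s + -δ * t := fun s => by ring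
  simp only [hlin, intervalIntegral.integral_comp_mul_add (fun x => exp x) hδ, integral_exp,
    smul_eq_mul, mul_zero, zero_add, neg_mul, add_neg_cancel, exp_zero]
  ring

theorem continuous_integral_left {η : ℝ → ℝ} (hη : Continuous η) (t : ℝ) :
    Continuous fun s => ∫ r in s..t, η r := by
  simp only [intervalIntegral.integral_symm t]
  exact (intervalIntegral.continuous_primitive (fun _ _ => hη.intervalIntegrable _ _) t).neg

theorem le_exp_mul_add_integral_of_deriv_add_mul_le {w η f : ℝ → ℝ} {a b : ℝ}
    (hη : Continuous η) (hf : Continuous f) (hw : Differentiable ℝ w) (hab : a ≤ b)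
    (hineq : ∀ t ∈ Ioo a b, deriv w t + η t * w t ≤ f t) :
    w b ≤ exp (-∫ s in a..b, η s) * w a + ∫ s in a..b, exp (-∫ r in s..b, η r) * f s := by
  set Θ : ℝ → ℝ := fun u => ∫ s in a..u, η s
  have hΘ : ∀ u, HasDerivAt Θ (η u) u := fun u => (hη.integral_hasStrictDerivAt a u).hasDerivAt
  have hexpΘf : Continuous fun s => exp (Θ s) * f s :=
    (continuous_iff_continuousAt.2 fun u => (hΘ u).continuousAt).rexp.mul hf
  set I : ℝ → ℝ := fun u => ∫ s in a..u, exp (Θ s) * f s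
  have hφ : ∀ u, HasDerivAt (fun u => exp (Θ u) * w u - I u)
      (exp (Θ u) * (deriv w u + η u * w u) - exp (Θ u) * f u) u := fun u =>
    (((hΘ u).exp.mul (hw u).hasDerivAt).sub
      (hexpΘf.integral_hasStrictDerivAt a u).hasDerivAt).congr_deriv (by ring)
  have hanti : AntitoneOn (fun u => exp (Θ u) * w u - I u) (Icc a b) := by
    refine antitoneOn_of_hasDerivWithinAt_nonpos (convex_Icc a b)
      (HasDerivAt.continuousOn fun u _ => hφ u) (fun u _ => (hφ u).hasDerivWithinAt) ?_
    intro u hu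
    rw [interior_Icc] at hu
    rw [← mul_sub]
    exact mul_nonpos_of_nonneg_of_nonpos (exp_pos _).le (sub_nonpos.2 (hineq u hu))
  have hfactor : exp (Θ b) * w b ≤ w a + I b := by
    have := hanti (left_mem_Icc.2 hab) (right_mem_Icc.2 hab) hab
    simp only [Θ, I, intervalIntegral.integral_same, exp_zero, one_mul, sub_zero] at this
    linarith
  have hkernel : exp (-Θ b) * I b = ∫ s in a..b, exp (-∫ r in s..b, η r) * f s := by
    rw [← intervalIntegral.integral_const_mul]
    refine intervalIntegral.integral_congr fun s _ => ?_
    rw [← intervalIntegral.integral_interval_sub_left (hη.intervalIntegrable a b)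
      (hη.intervalIntegrable a s), neg_sub, exp_sub, exp_neg]
    ring
  calc w b = exp (-Θ b) * (exp (Θ b) * w b) := by
        rw [← mul_assoc, ← exp_add, neg_add_cancel, exp_zero, one_mul]
    _ ≤ exp (-Θ b) * (w a + I b) := mul_le_mul_of_nonneg_left hfactor (exp_pos _).le
    _ = _ := by rw [mul_add, hkernel]

theorem forcing_error_estimate_general
    (w η : ℝ → ℝ) (δ₀ Fmax T : ℝ)
    (hδ₀ : 0 < δ₀)
    (hη : Continuous η)
    (hθ : ∀ ξ t : ℝ, 0 ≤ ξ → ξ ≤ t → δ₀ * (t - ξ) ≤ ∫ s in ξ..t, η s)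
    (hw : Differentiable ℝ w)
    (hFmax : 0 ≤ Fmax)
    (hineq : ∀ t ∈ Set.Icc (0:ℝ) T, deriv w t + η t * w t ≤ Fmax)
    (hw0 : w 0 = 0) :
    ∀ t ∈ Set.Icc (0:ℝ) T, w t ≤ (1 - Real.exp (-δ₀ * t)) / δ₀ * Fmax := by
  rintro t ⟨ht0, htT⟩
  have hduhamel := le_exp_mul_add_integral_of_deriv_add_mul_le hη continuous_const hw ht0
    fun s hs => hineq s ⟨hs.1.le, hs.2.le.trans htT⟩
  rw [hw0, mul_zero, zero_add] at hduhamel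
  calc w t ≤ ∫ s in (0:ℝ)..t, exp (-∫ r in s..t, η r) * Fmax := hduhamel
    _ ≤ ∫ s in (0:ℝ)..t, exp (-δ₀ * (t - s)) * Fmax := by
      refine intervalIntegral.integral_mono_on ht0
        (((continuous_integral_left hη t).neg.rexp.mul continuous_const).intervalIntegrable _ _)
        ((by fun_prop : Continuous fun s => exp (-δ₀ * (t - s)) * Fmax).intervalIntegrable _ _)
        fun s hs => mul_le_mul_of_nonneg_right (exp_le_exp.2 ?_) hFmax
      linarith [hθ s t hs.1 hs.2]
    _ = (1 - Real.exp (-δ₀ * t)) / δ₀ * Fmax := by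
      rw [intervalIntegral.integral_mul_const, integral_exp_neg_mul_sub hδ₀.ne']

theorem forcing_error_estimate
    (w η : ℝ → ℝ) (δ₀ Fmax T : ℝ)
    (hδ₀ : 0 < δ₀)
    (hη : Continuous η)
    (hθ : ∀ ξ t : ℝ, 0 ≤ ξ → ξ ≤ t → δ₀ * (t - ξ) ≤ ∫ s in ξ..t, η s)
    (hw : Differentiable ℝ w)
    (hwpos : ∀ t ≥ (0:ℝ), 0 ≤ w t)
    (hFmax : 0 ≤ Fmax)
    (hineq : ∀ t ∈ Set.Icc (0:ℝ) T, deriv w t + η t * w t ≤ Fmax)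
    (hw0 : w 0 = 0) :
    ∀ t ∈ Set.Icc (0:ℝ) T, w t ≤ (1 - Real.exp (-δ₀ * t)) / δ₀ * Fmax :=
  forcing_error_estimate_general w η δ₀ Fmax T hδ₀ hη hθ hw hFmax hineq hw0
end

section
/- Suppose η : ℝ → ℝ is continuous and ∫_ξ^t η(s) ds ≥ δ₀·(t-ξ) for all 0 ≤ ξ ≤ t with δ₀ > 0. If a nonnegative differentiable function E (representing ‖W‖²) satisfies E'(t) + 2η(t)·E(t) ≤ 2G² for all t ≥ 0, where G ≥ 0 is constant, and E(0) = 0, then E(t) ≤ (1 - exp(-2δ₀·t))/δ₀ · G² for all t ≥ 0. -/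
open Real

/-!
With `Θ t = ∫₀ᵗ 2η`, the integrating factor `exp Θ` turns the differential inequality into
`(E · exp Θ)' ≤ 2G² exp Θ`, so `E t ≤ 2G² ∫₀ᵗ exp (Θ s - Θ t) ds`. The averaged lower bound on `η`
gives `Θ t - Θ s ≥ 2δ₀ (t - s)`, and `∫₀ᵗ exp (2δ₀ (s - t)) ds = (1 - exp (-2δ₀ t)) / (2δ₀)`.
-/

theorem integral_exp_mul_sub_mul {δ : ℝ} (hδ : δ ≠ 0) (t : ℝ) :
    ∫ s in (0 : ℝ)..t, exp (δ * s - δ * t) = (1 - exp (-δ * t)) / δ := by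
  rw [intervalIntegral.integral_comp_mul_sub exp hδ, integral_exp]
  simp only [mul_zero, zero_sub, sub_self, exp_zero, smul_eq_mul, neg_mul]
  field_simp

theorem mul_exp_integral_le_of_deriv_add_mul_le {E η f : ℝ → ℝ} (hη : Continuous η)
    (hf : Continuous f) (hE : Differentiable ℝ E)
    (hineq : ∀ t ≥ (0 : ℝ), deriv E t + η t * E t ≤ f t) {t : ℝ} (ht : 0 ≤ t) :
    E t * exp (∫ s in (0 : ℝ)..t, η s) ≤
      E 0 + ∫ s in (0 : ℝ)..t, exp (∫ u in (0 : ℝ)..s, η u) * f s := by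
  set φ : ℝ → ℝ := fun x => exp (∫ u in (0 : ℝ)..x, η u)
  have hφ : ∀ x, HasDerivAt φ (φ x * η x) x := fun x =>
    (hη.integral_hasStrictDerivAt 0 x).hasDerivAt.exp
  have hφf : Continuous fun x => φ x * f x :=
    (continuous_iff_continuousAt.2 fun x => (hφ x).continuousAt).mul hf
  set g : ℝ → ℝ := fun x => E x * φ x - ∫ s in (0 : ℝ)..x, φ s * f s
  have hg : ∀ x, HasDerivAt g ((deriv E x + η x * E x - f x) * φ x) x := fun x =>
    (((hE x).hasDerivAt.mul (hφ x)).sub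
      (hφf.integral_hasStrictDerivAt 0 x).hasDerivAt).congr_deriv (by ring)
  have hg_diff : Differentiable ℝ g := fun x => (hg x).differentiableAt
  have hg_anti : AntitoneOn g (Set.Ici 0) := by
    refine antitoneOn_of_deriv_nonpos (convex_Ici 0) hg_diff.continuous.continuousOn
      hg_diff.differentiableOn fun x hx => ?_
    rw [interior_Ici] at hx
    rw [(hg x).deriv]
    exact mul_nonpos_of_nonpos_of_nonneg (by linarith [hineq x (le_of_lt hx)]) (exp_pos _).le
  have hgt := hg_anti Set.self_mem_Ici (Set.mem_Ici.2 ht) ht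
  simp only [g, φ, intervalIntegral.integral_same, exp_zero, mul_one, sub_zero] at hgt
  linarith

theorem integral_exp_primitive_le {η : ℝ → ℝ} {δ t : ℝ} (hη : Continuous η) (hδ : δ ≠ 0)
    (ht : 0 ≤ t) (hθ : ∀ ξ ∈ Set.Icc 0 t, δ * (t - ξ) ≤ ∫ s in ξ..t, η s) :
    ∫ s in (0 : ℝ)..t, exp (∫ u in (0 : ℝ)..s, η u) ≤
      exp (∫ u in (0 : ℝ)..t, η u) * ((1 - exp (-δ * t)) / δ) := by
  set Θ : ℝ → ℝ := fun x => ∫ u in (0 : ℝ)..x, η u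
  have hΘ : Continuous Θ :=
    intervalIntegral.continuous_primitive (fun a b => hη.intervalIntegrable a b) 0
  have hpointwise : ∀ s ∈ Set.Icc 0 t, exp (Θ s) ≤ exp (Θ t) * exp (δ * s - δ * t) := by
    intro s hs
    have hsplit : Θ t - Θ s = ∫ u in s..t, η u :=
      intervalIntegral.integral_interval_sub_left (hη.intervalIntegrable _ _)
        (hη.intervalIntegrable _ _)
    rw [← exp_add, exp_le_exp]
    linarith [hθ s hs]
  calc ∫ s in (0 : ℝ)..t, exp (Θ s)
      ≤ ∫ s in (0 : ℝ)..t, exp (Θ t) * exp (δ * s - δ * t) :=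
        intervalIntegral.integral_mono_on ht ((continuous_exp.comp hΘ).intervalIntegrable _ _)
          ((by fun_prop : Continuous fun s => exp (Θ t) * exp (δ * s - δ * t)).intervalIntegrable
            _ _) hpointwise
    _ = exp (Θ t) * ((1 - exp (-δ * t)) / δ) := by
        rw [intervalIntegral.integral_const_mul, integral_exp_mul_sub_mul hδ]

theorem boundary_error_estimate_general
    (E η : ℝ → ℝ) (δ₀ G : ℝ)
    (hδ₀ : 0 < δ₀)
    (hη : Continuous η)
    (hθ : ∀ ξ t : ℝ, 0 ≤ ξ → ξ ≤ t → δ₀ * (t - ξ) ≤ ∫ s in ξ..t, η s)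
    (hE : Differentiable ℝ E)
    (hineq : ∀ t ≥ (0:ℝ), deriv E t + 2 * η t * E t ≤ 2 * G ^ 2)
    (hE0 : E 0 = 0) :
    ∀ t ≥ (0:ℝ), E t ≤ (1 - Real.exp (-2 * δ₀ * t)) / δ₀ * G ^ 2 := by
  intro t ht
  have h2η : Continuous fun s => 2 * η s := continuous_const.mul hη
  have hgronwall := mul_exp_integral_le_of_deriv_add_mul_le h2η continuous_const hE hineq ht
  have hcompare := integral_exp_primitive_le (δ := 2 * δ₀) h2η (by positivity) ht
    fun ξ hξ => by
      rw [intervalIntegral.integral_const_mul]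
      linarith [hθ ξ t hξ.1 hξ.2]
  rw [hE0, zero_add, intervalIntegral.integral_mul_const] at hgronwall
  set Θ := ∫ s in (0 : ℝ)..t, 2 * η s
  have hbound : E t * exp Θ ≤ (1 - exp (-2 * δ₀ * t)) / δ₀ * G ^ 2 * exp Θ :=
    calc E t * exp Θ ≤ _ := hgronwall
      _ ≤ _ := mul_le_mul_of_nonneg_right hcompare (by positivity)
      _ = _ := by field_simp
  exact le_of_mul_le_mul_right hbound (exp_pos Θ)

theorem boundary_error_estimate
    (E η : ℝ → ℝ) (δ₀ G : ℝ)
    (hδ₀ : 0 < δ₀)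
    (hη : Continuous η)
    (hθ : ∀ ξ t : ℝ, 0 ≤ ξ → ξ ≤ t → δ₀ * (t - ξ) ≤ ∫ s in ξ..t, η s)
    (hE : Differentiable ℝ E)
    (hEpos : ∀ t ≥ (0:ℝ), 0 ≤ E t)
    (hG : 0 ≤ G)
    (hineq : ∀ t ≥ (0:ℝ), deriv E t + 2 * η t * E t ≤ 2 * G ^ 2)
    (hE0 : E 0 = 0) :
    ∀ t ≥ (0:ℝ), E t ≤ (1 - Real.exp (-2 * δ₀ * t)) / δ₀ * G ^ 2 :=
  boundary_error_estimate_general E η δ₀ G hδ₀ hη hθ hE hineq hE0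
end

section
/- Let A be a real symmetric n×n matrix diagonalized as above with C = Tᵀ W, and suppose the dissipative boundary condition sqrt(|Λ⁻|)·C⁻ = g holds for some vector g. Then Wᵀ A W ≥ -gᵀ g; i.e., the boundary quadratic form is bounded below by minus the squared norm of the boundary data. -/
open Matrix

theorem dissipative_boundary_condition_bound
    {n : ℕ} (A T : Matrix (Fin n) (Fin n) ℝ)
    (dp dm : Fin n → ℝ) (g W : Fin n → ℝ)
    (hA : A.IsSymm)
    (hT : T ∈ Matrix.orthogonalGroup (Fin n) ℝ)
    (hdp : ∀ i, 0 ≤ dp i)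
    (hdm : ∀ i, dm i ≤ 0)
    (hdecomp : A = T * (Matrix.diagonal dp + Matrix.diagonal dm) * Tᵀ)
    (hbc : ∀ i, Real.sqrt |dm i| * (Tᵀ.mulVec W) i = g i) :
    -(g ⬝ᵥ g) ≤ W ⬝ᵥ A.mulVec W := by
  set c : Fin n → ℝ := Tᵀ.mulVec W with hc
  have key : W ⬝ᵥ A.mulVec W = ∑ i, (dp i + dm i) * c i ^ 2 := by
    subst hdecomp
    rw [← Matrix.mulVec_mulVec, ← Matrix.mulVec_mulVec, Matrix.dotProduct_mulVec,
      ← Matrix.mulVec_transpose, hc]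
    simp only [Matrix.add_mulVec, dotProduct_add, dotProduct, Matrix.mulVec_diagonal]
    exact Finset.sum_congr rfl fun i _ => by
      simp only [Pi.add_apply, Matrix.mulVec_diagonal]; ring
  have hg : ∀ i, g i ^ 2 = -dm i * c i ^ 2 := by
    intro i
    rw [← hbc i, mul_pow, Real.sq_sqrt (abs_nonneg _), abs_of_nonpos (hdm i)]
  have hgg : -(g ⬝ᵥ g) = ∑ i, dm i * c i ^ 2 := by
    rw [dotProduct, ← Finset.sum_neg_distrib]
    refine Finset.sum_congr rfl fun i _ => ?_
    have := hg i; nlinarith [this]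
  rw [key, hgg]
  refine Finset.sum_le_sum fun i _ => ?_
  nlinarith [hdp i, sq_nonneg (c i)]
end
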